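/- arXiv:1503.07865 — 2 statements merged into one kernel-verified Lean document; each statement's English description precedes it below -/
import Mathlib

section
/- For any linear map E : M_d(ℂ) → M_d(ℂ), the purity of its Jamiołkowski state satisfies d² Tr[J(E)† J(E)] = S(E)² + ‖𝓔_sdl‖² + ‖𝓔_n‖² + (d²−1) u(E), where J(E) = (E ⊗ id)(Φ) and Φ = (1/d) ∑_{j,k=1}^{d} |jj⟩⟨kk| is the maximally entangled state on ℂ^d ⊗ ℂ^d. -/
open Matrix Kronecker ComplexOrder MeasureTheory

/-- `d×d` complex matrices. -/
abbrev Mat (d : ℕ) := Matrix (Fin d) (Fin d) ℂ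

/-- Matrices on `ℂ^d ⊗ ℂ^d`. -/
abbrev Mat2 (d : ℕ) := Matrix (Fin d × Fin d) (Fin d × Fin d) ℂ

noncomputable instance matMeasurableSpace {m n : Type*} : MeasurableSpace (Matrix m n ℂ) :=
  borel _

variable {d : ℕ}

/-- Liouville representation of a linear map in the basis `A`:
`𝓔_{kl} = Tr((A k)† E (A l))`. -/
noncomputable def Liou (A : Fin (d ^ 2) → Mat d) (E : Mat d →ₗ[ℂ] Mat d) :
    Matrix (Fin (d ^ 2)) (Fin (d ^ 2)) ℂ :=
  Matrix.of fun k l => Matrix.trace ((A k)ᴴ * E (A l))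

/-- The unitarity `u(E) = Tr(𝓔ᵤ† 𝓔ᵤ)/(d²-1)`, where `𝓔ᵤ` is the lower-right
`(d²-1)×(d²-1)` (unital) block of the Liouville representation. -/
noncomputable def unitarity (A : Fin (d ^ 2) → Mat d) (E : Mat d →ₗ[ℂ] Mat d) : ℝ :=
  (∑ k ∈ Finset.univ.filter (fun k : Fin (d ^ 2) => (k : ℕ) ≠ 0),
    ∑ l ∈ Finset.univ.filter (fun l : Fin (d ^ 2) => (l : ℕ) ≠ 0),
      ‖Liou A E k l‖ ^ 2) / ((d : ℝ) ^ 2 - 1)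

/-- `‖𝓔ₙ‖²`: squared Frobenius norm of the nonunital (bottom-left) column block. -/
noncomputable def nSq (A : Fin (d ^ 2) → Mat d) (E : Mat d →ₗ[ℂ] Mat d) : ℝ :=
  ∑ k ∈ Finset.univ.filter (fun k : Fin (d ^ 2) => (k : ℕ) ≠ 0),
    ∑ l ∈ Finset.univ.filter (fun l : Fin (d ^ 2) => (l : ℕ) = 0),
      ‖Liou A E k l‖ ^ 2

/-- `‖𝓔_sdl‖²`: squared Frobenius norm of the state-dependent-leakage (top-right) row block. -/
noncomputable def sdlSq (A : Fin (d ^ 2) → Mat d) (E : Mat d →ₗ[ℂ] Mat d) : ℝ :=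
  ∑ k ∈ Finset.univ.filter (fun k : Fin (d ^ 2) => (k : ℕ) = 0),
    ∑ l ∈ Finset.univ.filter (fun l : Fin (d ^ 2) => (l : ℕ) ≠ 0),
      ‖Liou A E k l‖ ^ 2

/-- The average survival rate `S(E) = Tr(E(𝟙))/d` (real part). -/
noncomputable def survival (d : ℕ) (E : Mat d →ₗ[ℂ] Mat d) : ℝ :=
  (Matrix.trace (E 1)).re / d

/-- The swap operator `S` on `ℂ^d ⊗ ℂ^d`, `S(x⊗y) = y⊗x`. -/
def swap (d : ℕ) : Mat2 d :=
  Matrix.of fun p q => if p.1 = q.2 ∧ p.2 = q.1 then 1 else 0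

/-- The Choi matrix `∑_{j,k} E(|j⟩⟨k|) ⊗ |j⟩⟨k|`. -/
noncomputable def choi (E : Mat d →ₗ[ℂ] Mat d) : Mat2 d :=
  Matrix.of fun p q => E (Matrix.single p.2 q.2 1) p.1 q.1

/-- Complete positivity: the Choi matrix is positive semidefinite. -/
def IsCP (E : Mat d →ₗ[ℂ] Mat d) : Prop := (choi E).PosSemidef

/-- Trace preserving. -/
def IsTP (E : Mat d →ₗ[ℂ] Mat d) : Prop := ∀ X : Mat d, (E X).trace = X.trace

/-- Trace nonincreasing on positive semidefinite inputs (with the complex order). -/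
def IsTNI (E : Mat d →ₗ[ℂ] Mat d) : Prop :=
  ∀ ρ : Mat d, ρ.PosSemidef → (E ρ).trace ≤ ρ.trace

/-- Hermiticity preserving. -/
def IsHermPreserving (E : Mat d →ₗ[ℂ] Mat d) : Prop := ∀ X : Mat d, E Xᴴ = (E X)ᴴ

/-- The induced map `E ⊗ F` on `M_{d²}(ℂ) = M_d(ℂ) ⊗ M_d(ℂ)`; it is the unique
linear map satisfying `(E ⊗ F)(A ⊗ₖ B) = E(A) ⊗ₖ F(B)`. -/
noncomputable def tensorMap (E F : Mat d →ₗ[ℂ] Mat d) : Mat2 d →ₗ[ℂ] Mat2 d where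
  toFun X := Matrix.of fun p q =>
    ∑ i : Fin d, ∑ j : Fin d, ∑ k : Fin d, ∑ l : Fin d,
      X (i, k) (j, l) *
        (E (Matrix.single i j 1) p.1 q.1 * F (Matrix.single k l 1) p.2 q.2)
  map_add' X Y := by
    ext p q
    simp [Matrix.add_apply, add_mul, Finset.sum_add_distrib]
  map_smul' c X := by
    ext p q
    simp [Matrix.smul_apply, Finset.mul_sum, smul_eq_mul, mul_assoc]

/-- Conjugation `ρ ↦ U ρ Uᴴ` as a linear map. -/
noncomputable def conjMap (U : Mat d) : Mat d →ₗ[ℂ] Mat d :=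
  LinearMap.mulLeft ℂ U ∘ₗ LinearMap.mulRight ℂ Uᴴ

/-- `B₁ = 𝟙_{d²}/d`. -/
noncomputable def B1 (d : ℕ) : Mat2 d := ((d : ℂ))⁻¹ • 1

/-- `B₂ = (S - 𝟙_{d²}/d)/√(d²-1)`. -/
noncomputable def B2 (d : ℕ) : Mat2 d :=
  ((Real.sqrt ((d : ℝ) ^ 2 - 1) : ℂ))⁻¹ • (swap d - ((d : ℂ))⁻¹ • 1)

/-- The 2×2 matrix `M(E)` with entries `M_{ij} = Tr[Bᵢ† (E⊗E)(Bⱼ)]`. -/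
noncomputable def Mmat (E : Mat d →ₗ[ℂ] Mat d) : Matrix (Fin 2) (Fin 2) ℂ :=
  Matrix.of fun i j =>
    Matrix.trace ((![B1 d, B2 d] i)ᴴ * tensorMap E E (![B1 d, B2 d] j))

/-- Auxiliary: interleave noise `E` and unitary conjugations along a list. -/
noncomputable def seqAux (E : Mat d →ₗ[ℂ] Mat d) : List (Mat d) → Mat d → Mat d
  | [], σ => σ
  | U :: rest, σ => seqAux E rest (U * E σ * Uᴴ)

/-- The output state `(𝓤_{j_m} ∘ E ∘ 𝓤_{j_{m-1}} ∘ E ∘ ⋯ ∘ E ∘ 𝓤_{j_1})(ρ)` for the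
sequence of unitaries given by the list (head applied first). -/
noncomputable def seqState (E : Mat d →ₗ[ℂ] Mat d) : List (Mat d) → Mat d → Mat d
  | [], ρ => ρ
  | U :: rest, ρ => seqAux E rest (U * ρ * Uᴴ)

/-- The maximally entangled state `Φ = (1/d) ∑_{j,k} |jj⟩⟨kk|`. -/
noncomputable def Phi (d : ℕ) : Mat2 d :=
  Matrix.of fun p q => if p.1 = p.2 ∧ q.1 = q.2 then ((d : ℂ))⁻¹ else 0

/-- The Jamiołkowski state `J(E) = (E ⊗ id)(Φ)`. -/
noncomputable def Jam (E : Mat d →ₗ[ℂ] Mat d) : Mat2 d :=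
  tensorMap E LinearMap.id (Phi d)

/-! The quantity `∑ₖₗ |Tr(Aₖ† E(Aₗ))|²` is the squared Hilbert–Schmidt norm of `E` as an operator on
the Hilbert space `M_d(ℂ) ≅ ℂ^{d²}`, so it does not depend on the orthonormal basis `A`. In the
basis of matrix units it is `∑ |E(|a⟩⟨b|)ᵢⱼ|²`, which is `d²` times the purity of `J(E)`, since the
entries of `J(E)` are `E(|a⟩⟨b|)ᵢⱼ / d`. Splitting the Liouville matrix along `A₁ = 𝟙/√d` into
blocks, the corner entry is `Tr E(𝟙) / d` and the other three blocks give `‖𝓔_sdl‖²`, `‖𝓔ₙ‖²` and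
`(d² − 1) u(E)`. -/

namespace Matrix

variable {𝕜 : Type*} [RCLike 𝕜] {m n : Type*}

noncomputable def toEuclideanSpace : Matrix m n 𝕜 ≃ₗ[𝕜] EuclideanSpace 𝕜 (m × n) :=
  (ofLinearEquiv 𝕜).symm ≪≫ₗ (LinearEquiv.curry 𝕜 𝕜 m n).symm ≪≫ₗ
    (WithLp.linearEquiv 2 𝕜 (m × n → 𝕜)).symm

@[simp]
theorem toEuclideanSpace_apply (X : Matrix m n 𝕜) (p : m × n) :
    toEuclideanSpace X p = X p.1 p.2 := rfl

variable [Fintype m] [Fintype n]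

theorem toEuclideanSpace_single [DecidableEq m] [DecidableEq n] (w : m × n) :
    toEuclideanSpace (single w.1 w.2 (1 : 𝕜)) = EuclideanSpace.basisFun (m × n) 𝕜 w := by
  ext p
  simp [single_apply, Prod.ext_iff, eq_comm]

theorem inner_toEuclideanSpace (X Y : Matrix m n 𝕜) :
    inner 𝕜 (toEuclideanSpace X) (toEuclideanSpace Y) = trace (Xᴴ * Y) := by
  simp only [PiLp.inner_apply, toEuclideanSpace_apply, RCLike.inner_apply, trace, diag, mul_apply,
    conjTranspose_apply, Fintype.sum_prod_type]
  rw [Finset.sum_comm]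
  simp [mul_comm]

theorem norm_toEuclideanSpace_sq (X : Matrix m n 𝕜) :
    ‖toEuclideanSpace X‖ ^ 2 = ∑ i, ∑ j, ‖X i j‖ ^ 2 := by
  simp [EuclideanSpace.norm_sq_eq, Fintype.sum_prod_type]

theorem re_trace_conjTranspose_mul_self (X : Matrix m n 𝕜) :
    RCLike.re (trace (Xᴴ * X)) = ∑ i, ∑ j, ‖X i j‖ ^ 2 := by
  rw [← inner_toEuclideanSpace, inner_self_eq_norm_sq, norm_toEuclideanSpace_sq]

theorem orthonormal_toEuclideanSpace_comp {ι : Type*} [DecidableEq ι] {A : ι → Matrix m n 𝕜}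
    (horth : ∀ k l, trace ((A k)ᴴ * A l) = if k = l then 1 else 0) :
    Orthonormal 𝕜 (toEuclideanSpace ∘ A) := by
  rw [orthonormal_iff_ite]
  simpa [inner_toEuclideanSpace] using horth

end Matrix

theorem LinearMap.sum_sq_norm_apply_eq_sum_sq_norm_adjoint_apply {𝕜 E F ι κ : Type*} [RCLike 𝕜]
    [NormedAddCommGroup E] [InnerProductSpace 𝕜 E] [FiniteDimensional 𝕜 E]
    [NormedAddCommGroup F] [InnerProductSpace 𝕜 F] [FiniteDimensional 𝕜 F]
    [Fintype ι] [Fintype κ] (b : OrthonormalBasis ι 𝕜 E) (c : OrthonormalBasis κ 𝕜 F)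
    (T : E →ₗ[𝕜] F) :
    ∑ i, ‖T (b i)‖ ^ 2 = ∑ j, ‖T.adjoint (c j)‖ ^ 2 := by
  calc ∑ i, ‖T (b i)‖ ^ 2 = ∑ i, ∑ j, ‖inner 𝕜 (c j) (T (b i))‖ ^ 2 := by
        simp_rw [c.sum_sq_norm_inner_right]
    _ = ∑ j, ∑ i, ‖inner 𝕜 (b i) (T.adjoint (c j))‖ ^ 2 := by
        rw [Finset.sum_comm]
        simp_rw [LinearMap.adjoint_inner_right, norm_inner_symm]
    _ = ∑ j, ‖T.adjoint (c j)‖ ^ 2 := by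
        simp_rw [b.sum_sq_norm_inner_right]

theorem sum_sq_norm_trace_conjTranspose_mul_apply {𝕜 m n ι : Type*} [RCLike 𝕜] [Fintype m]
    [Fintype n] [DecidableEq m] [DecidableEq n] [Fintype ι] [DecidableEq ι]
    (A : ι → Matrix m n 𝕜) (horth : ∀ k l, trace ((A k)ᴴ * A l) = if k = l then 1 else 0)
    (hspan : Submodule.span 𝕜 (Set.range A) = ⊤) (E : Matrix m n 𝕜 →ₗ[𝕜] Matrix m n 𝕜) :
    ∑ k, ∑ l, ‖trace ((A k)ᴴ * E (A l))‖ ^ 2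
      = ∑ w : m × n, ∑ i, ∑ j, ‖E (single w.1 w.2 1) i j‖ ^ 2 := by
  have hsp : ⊤ ≤ Submodule.span 𝕜 (Set.range (toEuclideanSpace ∘ A)) := by
    rw [Set.range_comp, ← LinearEquiv.coe_coe, Submodule.span_image, hspan, Submodule.map_top,
      LinearEquiv.range]
  set b := OrthonormalBasis.mk (orthonormal_toEuclideanSpace_comp horth) hsp
  have hb : ∀ k, b k = toEuclideanSpace (A k) := fun k => by simp [b]
  set T := toEuclideanSpace.conj E
  have hT : ∀ X, T (toEuclideanSpace X) = toEuclideanSpace (E X) := fun X => by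
    simp [T, LinearEquiv.conj_apply]
  let e := EuclideanSpace.basisFun (m × n) 𝕜
  calc ∑ k, ∑ l, ‖trace ((A k)ᴴ * E (A l))‖ ^ 2
      = ∑ l, ∑ k, ‖inner 𝕜 (b k) (T (b l))‖ ^ 2 := by
        rw [Finset.sum_comm]
        simp_rw [hb, hT, inner_toEuclideanSpace]
    _ = ∑ l, ‖T (b l)‖ ^ 2 := by simp_rw [b.sum_sq_norm_inner_right]
    _ = ∑ w, ‖T (e w)‖ ^ 2 := by
        rw [T.sum_sq_norm_apply_eq_sum_sq_norm_adjoint_apply b e,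
          T.sum_sq_norm_apply_eq_sum_sq_norm_adjoint_apply e e]
    _ = ∑ w : m × n, ∑ i, ∑ j, ‖E (single w.1 w.2 1) i j‖ ^ 2 := by
        refine Finset.sum_congr rfl fun w _ => ?_
        rw [← toEuclideanSpace_single, hT, norm_toEuclideanSpace_sq]

theorem Finset.sum_sum_eq_add_filter_blocks {ι M : Type*} [Fintype ι] [AddCommMonoid M]
    (P : ι → Prop) [DecidablePred P] (f : ι → ι → M) :
    ∑ k, ∑ l, f k l
      = ∑ k ∈ univ.filter P, ∑ l ∈ univ.filter P, f k l
        + ∑ k ∈ univ.filter P, ∑ l ∈ univ.filter (¬ P ·), f k l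
        + ∑ k ∈ univ.filter (¬ P ·), ∑ l ∈ univ.filter P, f k l
        + ∑ k ∈ univ.filter (¬ P ·), ∑ l ∈ univ.filter (¬ P ·), f k l := by
  have hrow : ∀ k, ∑ l, f k l
      = ∑ l ∈ univ.filter P, f k l + ∑ l ∈ univ.filter (¬ P ·), f k l :=
    fun k => (sum_filter_add_sum_filter_not univ P (f k)).symm
  rw [← sum_filter_add_sum_filter_not univ P]
  simp only [hrow, sum_add_distrib, add_assoc]

theorem jam_apply (E : Mat d →ₗ[ℂ] Mat d) (p q : Fin d × Fin d) :
    Jam E p q = (d : ℂ)⁻¹ * E (single p.2 q.2 1) p.1 q.1 := by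
  simp only [Jam, tensorMap, Phi, LinearMap.coe_mk, AddHom.coe_mk, of_apply, LinearMap.id_coe,
    id_eq, single, ite_mul, zero_mul, mul_ite, mul_zero, mul_one, ite_and]
  simp [Finset.sum_ite_eq']

theorem sq_mul_re_trace_conjTranspose_mul_jam (hd : d ≠ 0) (E : Mat d →ₗ[ℂ] Mat d) :
    (d : ℝ) ^ 2 * (trace ((Jam E)ᴴ * Jam E)).re
      = ∑ w : Fin d × Fin d, ∑ i, ∑ j, ‖E (single w.1 w.2 1) i j‖ ^ 2 := by
  rw [← RCLike.re_to_complex, re_trace_conjTranspose_mul_self]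
  calc (d : ℝ) ^ 2 * ∑ p, ∑ q, ‖Jam E p q‖ ^ 2
      = ∑ p : Fin d × Fin d, ∑ q : Fin d × Fin d, ‖E (single p.2 q.2 1) p.1 q.1‖ ^ 2 := by
        rw [Finset.mul_sum]
        refine Finset.sum_congr rfl fun p _ => ?_
        rw [Finset.mul_sum]
        refine Finset.sum_congr rfl fun q _ => ?_
        rw [jam_apply, norm_mul, mul_pow, norm_inv, Complex.norm_natCast]
        field_simp
    _ = ∑ w : Fin d × Fin d, ∑ i, ∑ j, ‖E (single w.1 w.2 1) i j‖ ^ 2 := by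
        simp only [Fintype.sum_prod_type]
        rw [Finset.sum_comm]
        refine Finset.sum_congr rfl fun a _ => ?_
        rw [Finset.sum_congr rfl fun i _ => Finset.sum_comm, Finset.sum_comm]

theorem liou_apply_of_val_eq_zero {A : Fin (d ^ 2) → Mat d}
    (hA0 : ∀ k : Fin (d ^ 2), (k : ℕ) = 0 → A k = ((Real.sqrt d : ℝ) : ℂ)⁻¹ • 1)
    (E : Mat d →ₗ[ℂ] Mat d) {k l : Fin (d ^ 2)} (hk : (k : ℕ) = 0) (hl : (l : ℕ) = 0) :
    Liou A E k l = trace (E 1) / d := by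
  simp only [Liou, of_apply, hA0 k hk, hA0 l hl, map_smul, conjTranspose_smul, conjTranspose_one,
    smul_mul_smul_comm, one_mul, trace_smul, smul_eq_mul, star_inv₀, Complex.star_def,
    Complex.conj_ofReal]
  rw [← mul_inv, ← Complex.ofReal_mul, Real.mul_self_sqrt (Nat.cast_nonneg _),
    Complex.ofReal_natCast, inv_mul_eq_div]

theorem sum_sum_sq_norm_liou_filter_val_eq_zero (hd : d ≠ 0) {A : Fin (d ^ 2) → Mat d}
    (hA0 : ∀ k : Fin (d ^ 2), (k : ℕ) = 0 → A k = ((Real.sqrt d : ℝ) : ℂ)⁻¹ • 1)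
    (E : Mat d →ₗ[ℂ] Mat d) :
    ∑ k ∈ Finset.univ.filter (fun k : Fin (d ^ 2) => (k : ℕ) = 0),
      ∑ l ∈ Finset.univ.filter (fun l : Fin (d ^ 2) => (l : ℕ) = 0), ‖Liou A E k l‖ ^ 2
      = ‖trace (E 1) / d‖ ^ 2 := by
  have hzero : Finset.univ.filter (fun k : Fin (d ^ 2) => (k : ℕ) = 0)
      = {⟨0, by positivity⟩} := by
    ext k
    simp [Fin.ext_iff]
  simp [hzero, liou_apply_of_val_eq_zero hA0 E]

theorem sq_sub_one_mul_unitarity (A : Fin (d ^ 2) → Mat d) (E : Mat d →ₗ[ℂ] Mat d) :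
    ((d : ℝ) ^ 2 - 1) * unitarity A E
      = ∑ k ∈ Finset.univ.filter (fun k : Fin (d ^ 2) => (k : ℕ) ≠ 0),
          ∑ l ∈ Finset.univ.filter (fun l : Fin (d ^ 2) => (l : ℕ) ≠ 0), ‖Liou A E k l‖ ^ 2 := by
  rw [unitarity, mul_comm]
  -- for `d = 1` the division by `d² - 1 = 0` is junk, but the unital block is then empty
  refine div_mul_cancel_of_imp fun h => Finset.sum_eq_zero fun k hk => ?_
  have hd1 : d ^ 2 = 1 := by exact_mod_cast sub_eq_zero.1 h
  have := k.isLt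
  simp only [Finset.mem_filter] at hk
  omega

theorem statement_15_general (d : ℕ)
    (A : Fin (d ^ 2) → Mat d)
    (horth : ∀ k l : Fin (d ^ 2), Matrix.trace ((A k)ᴴ * A l) = if k = l then 1 else 0)
    (hspan : Submodule.span ℂ (Set.range A) = ⊤)
    (hA0 : ∀ k : Fin (d ^ 2), (k : ℕ) = 0 → A k = ((Real.sqrt d : ℝ) : ℂ)⁻¹ • 1)
    (E : Mat d →ₗ[ℂ] Mat d) :
    (d : ℝ) ^ 2 * (Matrix.trace ((Jam E)ᴴ * Jam E)).re
      = ‖Matrix.trace (E 1) / (d : ℂ)‖ ^ 2 + sdlSq A E + nSq A E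
        + ((d : ℝ) ^ 2 - 1) * unitarity A E := by
  obtain rfl | hd := eq_or_ne d 0
  · simp [sdlSq, nSq, unitarity]
  calc (d : ℝ) ^ 2 * (trace ((Jam E)ᴴ * Jam E)).re
      = ∑ k, ∑ l, ‖Liou A E k l‖ ^ 2 := by
        rw [sq_mul_re_trace_conjTranspose_mul_jam hd,
          ← sum_sq_norm_trace_conjTranspose_mul_apply A horth hspan E]
        rfl
    _ = _ := by
        rw [Finset.sum_sum_eq_add_filter_blocks (fun k : Fin (d ^ 2) => (k : ℕ) = 0),
          sum_sum_sq_norm_liou_filter_val_eq_zero hd hA0, sq_sub_one_mul_unitarity]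
        rfl

/-- For any linear map `E`,
`d² Tr[J(E)† J(E)] = S(E)² + ‖𝓔_sdl‖² + ‖𝓔ₙ‖² + (d²−1) u(E)`. -/
theorem statement_15 (d : ℕ) (hd : 2 ≤ d)
    (A : Fin (d ^ 2) → Mat d)
    (horth : ∀ k l : Fin (d ^ 2), Matrix.trace ((A k)ᴴ * A l) = if k = l then 1 else 0)
    (hspan : Submodule.span ℂ (Set.range A) = ⊤)
    (hA0 : ∀ k : Fin (d ^ 2), (k : ℕ) = 0 → A k = ((Real.sqrt d : ℝ) : ℂ)⁻¹ • 1)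
    (E : Mat d →ₗ[ℂ] Mat d) :
    (d : ℝ) ^ 2 * (Matrix.trace ((Jam E)ᴴ * Jam E)).re
      = ‖Matrix.trace (E 1) / (d : ℂ)‖ ^ 2 + sdlSq A E + nSq A E
        + ((d : ℝ) ^ 2 - 1) * unitarity A E :=
  statement_15_general d A horth hspan hA0 E
end

section
/- Let E : M_d(ℂ) → M_d(ℂ) be a hermiticity-preserving linear map. With Π_s = (𝟙_{d²} + S)/(d(d+1)) the maximally mixed state on the symmetric subspace and E_a = (𝟙_{d²} − S)/2 the projector onto the antisymmetric subspace of ℂ^d ⊗ ℂ^d, one has the identity Tr[E_a · (E⊗E)(Π_s)] = ((d−1)/(2d)) · ( S(E)² − u(E) − ‖𝓔_n‖²/(d−1) + ‖𝓔_sdl‖²/(d+1) ). -/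
open Matrix Kronecker ComplexOrder MeasureTheory

variable {d : ℕ}

/-!
Write `T = E ⊗ E`. Expanding `E_a` and `Π_s`, the left side is
`(Tr T(𝟙) + Tr T(S) − Tr[S T(𝟙)] − Tr[S T(S)]) / (2d(d+1))`. Since `𝟙 = 𝟙 ⊗ 𝟙`,
`S = ∑ᵢⱼ eᵢⱼ ⊗ eⱼᵢ` and `Tr[S (X ⊗ Y)] = Tr(XY)`, hermiticity preservation
(`E(eⱼᵢ) = E(eᵢⱼ)†`) turns the four traces into `(Tr E(𝟙))²`, `∑ᵢⱼ |Tr E(eᵢⱼ)|²`, `‖E(𝟙)‖²` and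
`∑ᵢⱼ ‖E(eᵢⱼ)‖²`. The last three are squared norms of the first row, the first column and the
whole of the Liouville matrix, computed in the matrix-unit basis instead of `A`; Parseval's
identity makes this change of orthonormal basis harmless. Splitting off `𝓔₁₁ = Tr E(𝟙)/d` from
these rows and columns gives `‖𝓔_sdl‖²`, `‖𝓔ₙ‖²` and `(d² − 1) u(E)`.
-/

open scoped ComplexConjugate

theorem LinearMap.apply_eq_sum_single {R M m n : Type*} [CommSemiring R] [AddCommMonoid M]
    [Module R M] [Fintype m] [Fintype n] [DecidableEq m] [DecidableEq n]
    (f : Matrix m n R →ₗ[R] M) (X : Matrix m n R) :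
    f X = ∑ i, ∑ j, X i j • f (Matrix.single i j 1) := by
  conv_lhs => rw [matrix_eq_sum_single X]
  simp only [map_sum, ← map_smul, Matrix.smul_single, smul_eq_mul, mul_one]

namespace Matrix

variable {𝕜 : Type*} [RCLike 𝕜] {ι m n : Type*} [Fintype ι] [Fintype m] [Fintype n]

theorem star_dotProduct_self_eq_sum_norm_sq (v : n → 𝕜) :
    star v ⬝ᵥ v = ((∑ p, ‖v p‖ ^ 2 : ℝ) : 𝕜) := by
  simp [dotProduct, RCLike.conj_mul]

theorem trace_mul_conjTranspose_self_eq_sum_norm_sq (M : Matrix m n 𝕜) :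
    trace (M * Mᴴ) = ((∑ i, ∑ j, ‖M i j‖ ^ 2 : ℝ) : 𝕜) := by
  simp [trace, mul_apply, RCLike.mul_conj]

theorem sum_norm_sq_mulVec_of_mul_conjTranspose_eq_one [DecidableEq ι] [DecidableEq n]
    {W : Matrix ι n 𝕜} (hcard : Fintype.card ι = Fintype.card n) (hW : W * Wᴴ = 1)
    (v : n → 𝕜) :
    ∑ k, ‖(W *ᵥ v) k‖ ^ 2 = ∑ p, ‖v p‖ ^ 2 := by
  have hWW : Wᴴ * W = 1 := (mul_eq_one_comm_of_card_eq _ _ _ hcard).mp hW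
  have key : star (W *ᵥ v) ⬝ᵥ (W *ᵥ v) = star v ⬝ᵥ v := by
    rw [star_mulVec, ← dotProduct_mulVec, mulVec_mulVec, hWW, one_mulVec]
  rwa [star_dotProduct_self_eq_sum_norm_sq, star_dotProduct_self_eq_sum_norm_sq,
    RCLike.ofReal_inj] at key

variable [DecidableEq ι] {A : ι → Matrix m n 𝕜}
  (horth : ∀ k l, trace ((A k)ᴴ * A l) = if k = l then 1 else 0)
  (hcard : Fintype.card ι = Fintype.card m * Fintype.card n)
include horth hcard

theorem sum_norm_sq_sum_mul_of_orthonormal (c : Matrix m n 𝕜) :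
    ∑ k, ‖∑ i, ∑ j, A k i j * c i j‖ ^ 2 = ∑ i, ∑ j, ‖c i j‖ ^ 2 := by
  classical
  let V : Matrix ι (m × n) 𝕜 := of fun k p => A k p.1 p.2
  have hV : V * Vᴴ = 1 := by
    ext k l
    have := horth l k
    simp only [trace, diag_apply, mul_apply, conjTranspose_apply, RCLike.star_def] at this
    simp only [one_apply, @eq_comm _ k l]
    rw [← this]
    simp [V, mul_apply, Fintype.sum_prod_type, mul_comm]
    exact Finset.sum_comm
  have := sum_norm_sq_mulVec_of_mul_conjTranspose_eq_one (by simpa using hcard) hV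
    (fun p => c p.1 p.2)
  simpa [V, mulVec, dotProduct, Fintype.sum_prod_type] using this

theorem sum_norm_sq_apply_of_orthonormal [DecidableEq m] [DecidableEq n]
    (φ : Matrix m n 𝕜 →ₗ[𝕜] 𝕜) :
    ∑ k, ‖φ (A k)‖ ^ 2 = ∑ i, ∑ j, ‖φ (single i j 1)‖ ^ 2 := by
  refine (Finset.sum_congr rfl fun k _ => ?_).trans
    (sum_norm_sq_sum_mul_of_orthonormal horth hcard (of fun i j => φ (single i j 1)))
  rw [φ.apply_eq_sum_single]
  simp only [smul_eq_mul, of_apply]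

theorem sum_norm_sq_trace_conjTranspose_mul_of_orthonormal (M : Matrix m n 𝕜) :
    ∑ k, ‖trace ((A k)ᴴ * M)‖ ^ 2 = ∑ i, ∑ j, ‖M i j‖ ^ 2 := by
  have h := sum_norm_sq_sum_mul_of_orthonormal horth hcard (M.map conj)
  simp only [map_apply, RCLike.norm_conj] at h
  rw [← h]
  refine Finset.sum_congr rfl fun k _ => ?_
  rw [← RCLike.norm_conj, trace, Finset.sum_comm]
  simp [mul_apply, map_sum, mul_comm]

theorem sum_sum_norm_sq_map_of_orthonormal [DecidableEq m] [DecidableEq n] {m' n' : Type*}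
    [Fintype m'] [Fintype n'] (E : Matrix m n 𝕜 →ₗ[𝕜] Matrix m' n' 𝕜) :
    ∑ k, ∑ a, ∑ b, ‖E (A k) a b‖ ^ 2 = ∑ i, ∑ j, ∑ a, ∑ b, ‖E (single i j 1) a b‖ ^ 2 := by
  calc ∑ k, ∑ a, ∑ b, ‖E (A k) a b‖ ^ 2
      = ∑ p : m' × n', ∑ k, ‖(entryLinearMap 𝕜 𝕜 p.1 p.2 ∘ₗ E) (A k)‖ ^ 2 := by
        simp only [Fintype.sum_prod_type, LinearMap.comp_apply, entryLinearMap_apply]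
        rw [Finset.sum_comm]
        exact Finset.sum_congr rfl fun _ _ => Finset.sum_comm
    _ = ∑ p : m' × n', ∑ q : m × n, ‖E (single q.1 q.2 1) p.1 p.2‖ ^ 2 := by
        refine Finset.sum_congr rfl fun p _ => ?_
        rw [sum_norm_sq_apply_of_orthonormal horth hcard, Fintype.sum_prod_type]
        rfl
    _ = ∑ i, ∑ j, ∑ a, ∑ b, ‖E (single i j 1) a b‖ ^ 2 := by
        rw [Finset.sum_comm]
        simp only [Fintype.sum_prod_type]

end Matrix

theorem Fin.filter_val_eq_zero {n : ℕ} [NeZero n] :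
    Finset.univ.filter (fun i : Fin n => (i : ℕ) = 0) = {0} := by
  ext i
  simp only [Finset.mem_filter, Finset.mem_univ, true_and, Finset.mem_singleton, Fin.ext_iff,
    Fin.val_zero]

theorem Fin.sum_univ_eq_zero_add_sum_filter_val_ne_zero {M : Type*} [AddCommMonoid M] {n : ℕ}
    [NeZero n] (f : Fin n → M) :
    ∑ i, f i = f 0 + ∑ i ∈ Finset.univ.filter (fun i : Fin n => (i : ℕ) ≠ 0), f i := by
  rw [← Finset.sum_filter_add_sum_filter_not Finset.univ (fun i : Fin n => (i : ℕ) = 0),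
    Fin.filter_val_eq_zero, Finset.sum_singleton]

theorem Complex.norm_inv_sqrt_mul_sq {x : ℝ} (hx : 0 ≤ x) (z : ℂ) :
    ‖((√x : ℝ) : ℂ)⁻¹ * z‖ ^ 2 = ‖z‖ ^ 2 / x := by
  rw [norm_mul, norm_inv, Complex.norm_real, Real.norm_of_nonneg (Real.sqrt_nonneg x), mul_pow,
    inv_pow, Real.sq_sqrt hx, inv_mul_eq_div]

section TensorMap

variable {d : ℕ}

theorem tensorMap_kronecker (E F : Mat d →ₗ[ℂ] Mat d) (X Y : Mat d) :
    tensorMap E F (X ⊗ₖ Y) = E X ⊗ₖ F Y := by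
  ext ⟨p₁, p₂⟩ ⟨q₁, q₂⟩
  rw [E.apply_eq_sum_single X, F.apply_eq_sum_single Y]
  simp only [tensorMap, LinearMap.coe_mk, AddHom.coe_mk, of_apply, kronecker_apply,
    Matrix.sum_apply, Matrix.smul_apply, smul_eq_mul, Finset.sum_mul_sum]
  refine Finset.sum_congr rfl fun i _ => ?_
  rw [Finset.sum_comm]
  refine Finset.sum_congr rfl fun k _ => Finset.sum_congr rfl fun j _ =>
    Finset.sum_congr rfl fun l _ => ?_
  ring

theorem tensorMap_one (E F : Mat d →ₗ[ℂ] Mat d) : tensorMap E F 1 = E 1 ⊗ₖ F 1 := by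
  rw [← one_kronecker_one, tensorMap_kronecker]

theorem swap_eq_sum_kronecker_single :
    swap d = ∑ i : Fin d, ∑ j : Fin d, single i j (1 : ℂ) ⊗ₖ single j i 1 := by
  ext ⟨p₁, p₂⟩ ⟨q₁, q₂⟩
  simp only [_root_.swap, of_apply, Matrix.sum_apply, kronecker_apply, single_apply]
  simp [ite_and, eq_comm]

theorem tensorMap_swap (E F : Mat d →ₗ[ℂ] Mat d) :
    tensorMap E F (swap d) = ∑ i, ∑ j, E (single i j 1) ⊗ₖ F (single j i 1) := by
  simp only [swap_eq_sum_kronecker_single, map_sum, tensorMap_kronecker]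

theorem trace_swap_mul_kronecker (X Y : Mat d) :
    trace (swap d * (X ⊗ₖ Y)) = trace (X * Y) := by
  simp only [trace, diag_apply, mul_apply, _root_.swap, of_apply, kronecker_apply,
    Fintype.sum_prod_type]
  simp only [ite_and, ite_mul, one_mul, zero_mul, Finset.sum_ite_eq, Finset.mem_univ, if_true]
  rw [Finset.sum_comm]

theorem trace_one_sub_swap_mul_tensorMap_one_add_swap (E F : Mat d →ₗ[ℂ] Mat d) :
    trace ((1 - swap d) * tensorMap E F (1 + swap d)) =
      trace (E 1) * trace (F 1) + ∑ i, ∑ j, trace (E (single i j 1)) * trace (F (single j i 1))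
        - trace (E 1 * F 1) - ∑ i, ∑ j, trace (E (single i j 1) * F (single j i 1)) := by
  rw [map_add, tensorMap_one, tensorMap_swap]
  simp only [sub_mul, mul_add, one_mul, trace_sub, trace_add, trace_kronecker, trace_sum,
    Matrix.mul_sum, trace_swap_mul_kronecker]
  ring

end TensorMap

namespace IsHermPreserving

variable {d : ℕ} {E : Mat d →ₗ[ℂ] Mat d} (hE : IsHermPreserving E)
include hE

theorem map_single_swap (i j : Fin d) : E (single j i 1) = (E (single i j 1))ᴴ := by
  rw [← hE, conjTranspose_single, star_one]

theorem isHermitian_map_one : (E 1).IsHermitian := by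
  rw [IsHermitian, ← hE, conjTranspose_one]

theorem star_trace_map_one : star (trace (E 1)) = trace (E 1) := by
  rw [← trace_conjTranspose, hE.isHermitian_map_one.eq]

theorem trace_one_sub_swap_mul_tensorMap_one_add_swap :
    trace ((1 - swap d) * tensorMap E E (1 + swap d)) =
      trace (E 1) ^ 2 + ((∑ i, ∑ j, ‖trace (E (single i j 1))‖ ^ 2 : ℝ) : ℂ)
        - ((∑ a, ∑ b, ‖E 1 a b‖ ^ 2 : ℝ) : ℂ)
        - ((∑ i, ∑ j, ∑ a, ∑ b, ‖E (single i j 1) a b‖ ^ 2 : ℝ) : ℂ) := by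
  have htrace : ∀ i j, trace (E (single i j 1)) * trace (E (single j i 1)) =
      ((‖trace (E (single i j 1))‖ ^ 2 : ℝ) : ℂ) := fun i j => by
    rw [hE.map_single_swap i j, trace_conjTranspose, RCLike.star_def, RCLike.mul_conj]
    push_cast; rfl
  have hone : trace (E 1 * E 1) = ((∑ a, ∑ b, ‖E 1 a b‖ ^ 2 : ℝ) : ℂ) := by
    nth_rw 2 [← hE.isHermitian_map_one.eq]
    exact trace_mul_conjTranspose_self_eq_sum_norm_sq _
  have hmul : ∀ i j, trace (E (single i j 1) * E (single j i 1)) =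
      ((∑ a, ∑ b, ‖E (single i j 1) a b‖ ^ 2 : ℝ) : ℂ) := fun i j => by
    rw [hE.map_single_swap i j]
    exact trace_mul_conjTranspose_self_eq_sum_norm_sq _
  rw [_root_.trace_one_sub_swap_mul_tensorMap_one_add_swap, hone]
  simp only [htrace, hmul]
  push_cast
  ring

end IsHermPreserving

section LiouvilleBlocks

variable {d : ℕ} [NeZero d] (A : Fin (d ^ 2) → Mat d) (E : Mat d →ₗ[ℂ] Mat d)

theorem sum_norm_sq_liou_zero_left_eq_add_sdlSq :
    ∑ l, ‖Liou A E 0 l‖ ^ 2 = ‖Liou A E 0 0‖ ^ 2 + sdlSq A E := by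
  rw [Fin.sum_univ_eq_zero_add_sum_filter_val_ne_zero, sdlSq, Fin.filter_val_eq_zero,
    Finset.sum_singleton]

theorem sum_norm_sq_liou_zero_right_eq_add_nSq :
    ∑ k, ‖Liou A E k 0‖ ^ 2 = ‖Liou A E 0 0‖ ^ 2 + nSq A E := by
  simp only [Fin.sum_univ_eq_zero_add_sum_filter_val_ne_zero (fun k => ‖Liou A E k 0‖ ^ 2), nSq,
    Fin.filter_val_eq_zero, Finset.sum_singleton]

theorem sum_sum_norm_sq_liou_eq_add_unitarity (hd : (d : ℝ) ^ 2 ≠ 1) :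
    ∑ k, ∑ l, ‖Liou A E k l‖ ^ 2 =
      ‖Liou A E 0 0‖ ^ 2 + nSq A E + sdlSq A E + ((d : ℝ) ^ 2 - 1) * unitarity A E := by
  rw [unitarity, mul_div_cancel₀ _ (sub_ne_zero.mpr hd),
    Fin.sum_univ_eq_zero_add_sum_filter_val_ne_zero, sum_norm_sq_liou_zero_left_eq_add_sdlSq, nSq]
  simp only [Fin.sum_univ_eq_zero_add_sum_filter_val_ne_zero (fun l => ‖Liou A E _ l‖ ^ 2),
    Finset.sum_add_distrib, Fin.filter_val_eq_zero, Finset.sum_singleton]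
  ring

end LiouvilleBlocks

section LiouvilleParseval

variable {d : ℕ} {A : Fin (d ^ 2) → Mat d} (E : Mat d →ₗ[ℂ] Mat d)

theorem sum_sum_norm_sq_liou_eq_sum_map_single
    (horth : ∀ k l, trace ((A k)ᴴ * A l) = if k = l then 1 else 0) :
    ∑ k, ∑ l, ‖Liou A E k l‖ ^ 2 = ∑ i, ∑ j, ∑ a, ∑ b, ‖E (single i j 1) a b‖ ^ 2 := by
  have hcard : Fintype.card (Fin (d ^ 2)) = Fintype.card (Fin d) * Fintype.card (Fin d) := by
    simp [sq]
  rw [Finset.sum_comm, ← sum_sum_norm_sq_map_of_orthonormal horth hcard E]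
  exact Finset.sum_congr rfl fun l _ =>
    sum_norm_sq_trace_conjTranspose_mul_of_orthonormal horth hcard (E (A l))

variable [NeZero d] (hA0 : A 0 = ((√d : ℝ) : ℂ)⁻¹ • 1)
include hA0

theorem liou_zero_left (l : Fin (d ^ 2)) :
    Liou A E 0 l = ((√d : ℝ) : ℂ)⁻¹ * trace (E (A l)) := by
  simp [Liou, hA0, conjTranspose_smul, trace_smul]

theorem liou_zero_right (k : Fin (d ^ 2)) :
    Liou A E k 0 = ((√d : ℝ) : ℂ)⁻¹ * trace ((A k)ᴴ * E 1) := by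
  simp [Liou, hA0, trace_smul]

theorem liou_zero_zero : Liou A E 0 0 = trace (E 1) / d := by
  rw [liou_zero_left E hA0, hA0, map_smul, trace_smul, smul_eq_mul, ← mul_assoc, ← mul_inv,
    ← Complex.ofReal_mul, Real.mul_self_sqrt (Nat.cast_nonneg d), Complex.ofReal_natCast,
    inv_mul_eq_div]

variable (horth : ∀ k l, trace ((A k)ᴴ * A l) = if k = l then 1 else 0)
include horth

theorem sum_norm_sq_liou_zero_left_eq_sum_trace_single :
    ∑ l, ‖Liou A E 0 l‖ ^ 2 = (∑ i, ∑ j, ‖trace (E (single i j 1))‖ ^ 2) / d := by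
  simp only [liou_zero_left E hA0, Complex.norm_inv_sqrt_mul_sq (Nat.cast_nonneg d),
    ← Finset.sum_div]
  exact congrArg (· / (d : ℝ))
    (sum_norm_sq_apply_of_orthonormal horth (by simp [sq]) (traceLinearMap _ ℂ ℂ ∘ₗ E))

theorem sum_norm_sq_liou_zero_right_eq_sum_map_one :
    ∑ k, ‖Liou A E k 0‖ ^ 2 = (∑ a, ∑ b, ‖E 1 a b‖ ^ 2) / d := by
  simp only [liou_zero_right E hA0, Complex.norm_inv_sqrt_mul_sq (Nat.cast_nonneg d),
    ← Finset.sum_div]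
  rw [sum_norm_sq_trace_conjTranspose_mul_of_orthonormal horth (by simp [sq])]

end LiouvilleParseval

theorem statement_19_general (d : ℕ) (hd : 2 ≤ d)
    (A : Fin (d ^ 2) → Mat d)
    (horth : ∀ k l : Fin (d ^ 2), Matrix.trace ((A k)ᴴ * A l) = if k = l then 1 else 0)
    (hA0 : ∀ k : Fin (d ^ 2), (k : ℕ) = 0 → A k = ((Real.sqrt d : ℝ) : ℂ)⁻¹ • 1)
    (E : Mat d →ₗ[ℂ] Mat d) (hE : IsHermPreserving E) :
    Matrix.trace (((2 : ℂ)⁻¹ • (1 - swap d)) *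
        tensorMap E E (((d : ℂ) * ((d : ℂ) + 1))⁻¹ • (1 + swap d)))
      = (((d : ℂ) - 1) / (2 * (d : ℂ))) *
          ((Matrix.trace (E 1) / (d : ℂ)) ^ 2 - ((unitarity A E : ℝ) : ℂ)
            - ((nSq A E : ℝ) : ℂ) / ((d : ℂ) - 1)
            + ((sdlSq A E : ℝ) : ℂ) / ((d : ℂ) + 1)) := by
  have : NeZero d := ⟨by omega⟩
  have hA0' : A 0 = ((√d : ℝ) : ℂ)⁻¹ • 1 := hA0 0 rfl
  have hd0 : (d : ℝ) ≠ 0 := by positivity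
  have hd1 : (d : ℝ) ^ 2 ≠ 1 := by
    have : (2 : ℝ) ≤ d := by exact_mod_cast hd
    nlinarith
  have hrow := sum_norm_sq_liou_zero_left_eq_sum_trace_single E hA0' horth
  have hcol := sum_norm_sq_liou_zero_right_eq_sum_map_one E hA0' horth
  have hfull := sum_sum_norm_sq_liou_eq_sum_map_single E horth
  rw [sum_norm_sq_liou_zero_left_eq_add_sdlSq, eq_div_iff hd0] at hrow
  rw [sum_norm_sq_liou_zero_right_eq_add_nSq, eq_div_iff hd0] at hcol
  rw [sum_sum_norm_sq_liou_eq_add_unitarity A E hd1] at hfull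
  have h00 : (‖Liou A E 0 0‖ : ℂ) ^ 2 = (trace (E 1) / d) ^ 2 := by
    rw [← Complex.mul_conj', liou_zero_zero E hA0', map_div₀, Complex.conj_natCast,
      ← RCLike.star_def, hE.star_trace_map_one, sq]
  rw [map_smul, Matrix.smul_mul, Matrix.mul_smul, trace_smul, trace_smul,
    hE.trace_one_sub_swap_mul_tensorMap_one_add_swap, ← hrow, ← hcol, ← hfull]
  push_cast
  rw [h00]
  have hdC : (d : ℂ) ≠ 0 := by exact_mod_cast hd0
  have hdC1 : (d : ℂ) - 1 ≠ 0 := sub_ne_zero.mpr (by exact_mod_cast (by omega : d ≠ 1))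
  have hdC2 : (d : ℂ) + 1 ≠ 0 := by exact_mod_cast d.succ_ne_zero
  simp only [smul_eq_mul]
  field_simp
  ring

/-- For hermiticity-preserving `E`, with `Π_s = (𝟙 + S)/(d(d+1))` and
`E_a = (𝟙 − S)/2`:
`Tr[E_a (E⊗E)(Π_s)] = ((d−1)/(2d))(S(E)² − u(E) − ‖𝓔ₙ‖²/(d−1) + ‖𝓔_sdl‖²/(d+1))`. -/
theorem statement_19 (d : ℕ) (hd : 2 ≤ d)
    (A : Fin (d ^ 2) → Mat d)
    (horth : ∀ k l : Fin (d ^ 2), Matrix.trace ((A k)ᴴ * A l) = if k = l then 1 else 0)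
    (hspan : Submodule.span ℂ (Set.range A) = ⊤)
    (hA0 : ∀ k : Fin (d ^ 2), (k : ℕ) = 0 → A k = ((Real.sqrt d : ℝ) : ℂ)⁻¹ • 1)
    (E : Mat d →ₗ[ℂ] Mat d) (hE : IsHermPreserving E) :
    Matrix.trace (((2 : ℂ)⁻¹ • (1 - swap d)) *
        tensorMap E E (((d : ℂ) * ((d : ℂ) + 1))⁻¹ • (1 + swap d)))
      = (((d : ℂ) - 1) / (2 * (d : ℂ))) *
          ((Matrix.trace (E 1) / (d : ℂ)) ^ 2 - ((unitarity A E : ℝ) : ℂ)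
            - ((nSq A E : ℝ) : ℂ) / ((d : ℂ) - 1)
            + ((sdlSq A E : ℝ) : ℂ) / ((d : ℂ) + 1)) :=
  statement_19_general d hd A horth hA0 E hE
end
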